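/- Let T : ℝ₊^N → ℝ₊₊^N be a positive concave mapping and let M be its lower bounding matrix. If T has a fixed point, i.e., there exists x ∈ ℝ₊^N with T(x) = x, then the spectral radius of M is strictly smaller than one: ρ(M) < 1. -/

import Mathlib

open Matrix Filter Topology

noncomputable section

/-- `g` is a supergradient of `f` at `x`: the supergradient inequality holds for all
points `y` in the nonnegative orthant. -/
def IsSupergrad {N : ℕ} (f : (Fin N → ℝ) → ℝ) (x g : Fin N → ℝ) : Prop :=
  ∀ y : Fin N → ℝ, 0 ≤ y → f y ≤ f x + ∑ i, g i * (y i - x i)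

/-- `M` is the lower bounding matrix of the positive concave mapping with components `f i`:
`M i k` is the infimum of the `k`-th components of all supergradients of `f i` at points of
the nonnegative orthant. -/
def IsLBM {N : ℕ} (f : Fin N → (Fin N → ℝ) → ℝ) (M : Matrix (Fin N) (Fin N) ℝ) : Prop :=
  ∀ i k, M i k =
    sInf {t : ℝ | ∃ x : Fin N → ℝ, 0 ≤ x ∧ ∃ g : Fin N → ℝ, IsSupergrad (f i) x g ∧ g k = t}

/-- The spectral radius of a real matrix: the supremum of the moduli of its complex
eigenvalues. -/
def specRad {N : ℕ} (M : Matrix (Fin N) (Fin N) ℝ) : ENNReal :=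
  spectralRadius ℂ (M.map (algebraMap ℝ ℂ))

/-! At a fixed point `x` we have `x = T x > 0`, so `x` lies in the interior of the orthant and
each `f i` has a supergradient `g i` there. Positivity of `f i` on the orthant forces every
supergradient, hence every entry of `M`, to be nonnegative, and `M ≤ g` entrywise. The
supergradient inequality between `x` and `0` gives `(M x)_i ≤ ⟨g i, x⟩ ≤ f i x - f i 0 < x_i`,
so `M x ≤ c x` for some `c < 1`, and the Collatz–Wielandt bound for nonnegative matrices yields
`ρ(M) ≤ c`. -/

section Hypograph

variable {α : Type*} [TopologicalSpace α] {s : Set α} {f : α → ℝ}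

theorem notMem_interior_hypograph (x : α) :
    (x, f x) ∉ interior {p : α × ℝ | p.1 ∈ s ∧ p.2 ≤ f p.1} := by
  intro hx
  have hnhds : ∀ᶠ t in 𝓝 (f x), (x, t) ∈ {p : α × ℝ | p.1 ∈ s ∧ p.2 ≤ f p.1} :=
    (Continuous.prodMk_right x).continuousAt.preimage_mem_nhds (mem_interior_iff_mem_nhds.1 hx)
  obtain ⟨t, hxt, -, htx⟩ := hnhds.exists_gt
  exact (htx.trans_lt hxt).false

theorem mem_interior_hypograph_of_lt {x : α} (hx : x ∈ interior s) (hf : ContinuousAt f x) {t : ℝ}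
    (ht : t < f x) : (x, t) ∈ interior {p : α × ℝ | p.1 ∈ s ∧ p.2 ≤ f p.1} := by
  rw [mem_interior_iff_mem_nhds]
  have hfst : ∀ᶠ p in 𝓝 (x, t), p.1 ∈ s :=
    continuous_fst.continuousAt.preimage_mem_nhds (mem_interior_iff_mem_nhds.1 hx)
  have hlt : ∀ᶠ p : α × ℝ in 𝓝 (x, t), p.2 < f p.1 :=
    continuous_snd.continuousAt.eventually_lt (hf.comp continuous_fst.continuousAt) ht
  filter_upwards [hfst, hlt] with p hp hpf using ⟨hp, hpf.le⟩

end Hypograph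

theorem ConcaveOn.exists_le_add_of_mem_interior {E : Type*} [NormedAddCommGroup E]
    [NormedSpace ℝ E] [FiniteDimensional ℝ E] {s : Set E} {f : E → ℝ} (hf : ConcaveOn ℝ s f)
    {x : E} (hx : x ∈ interior s) : ∃ φ : StrongDual ℝ E, ∀ y ∈ s, f y ≤ f x + φ (y - x) := by
  set A := {p : E × ℝ | p.1 ∈ s ∧ p.2 ≤ f p.1}
  have hA : Convex ℝ A := hf.convex_hypograph
  have hbelow : (x, f x - 1) ∈ interior A :=
    mem_interior_hypograph_of_lt hx (hf.continuousOn_interior.continuousAt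
      (isOpen_interior.mem_nhds hx)) (sub_one_lt _)
  -- a functional separating `(x, f x)` from the hypograph; its vertical part `β` is positive
  -- because `(x, f x - 1)` is an interior point, and `-ψ / β` is the supergradient
  obtain ⟨L, hL⟩ := geometric_hahn_banach_open_point hA.interior isOpen_interior
    (notMem_interior_hypograph x)
  have hle : ∀ a ∈ A, L a ≤ L (x, f x) := by
    refine fun a ha => closure_minimal (fun b hb => (hL b hb).le)
      (isClosed_le L.continuous continuous_const) ?_
    rw [hA.closure_interior_eq_closure_of_nonempty_interior ⟨_, hbelow⟩]
    exact subset_closure ha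
  set ψ := L.comp (ContinuousLinearMap.inl ℝ E ℝ)
  set β := L (0, 1)
  have hsplit : ∀ y t, L (y, t) = ψ y + t * β := fun y t => by
    have : ((0 : E), t) = t • ((0 : E), (1 : ℝ)) := by simp
    rw [← L.comp_inl_add_comp_inr (y, t)]
    simp only [ContinuousLinearMap.comp_apply, ContinuousLinearMap.inr_apply, this, L.map_smul,
      smul_eq_mul, ψ, β]
  have hβ : 0 < β := by
    have := hL _ hbelow
    rw [hsplit, hsplit] at this
    linarith
  refine ⟨-β⁻¹ • ψ, fun y hy => ?_⟩
  have := hle (y, f y) ⟨hy, le_rfl⟩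
  rw [hsplit, hsplit] at this
  simp only [_root_.smul_apply, map_sub, smul_eq_mul]
  field_simp
  linarith

section Orthant

variable {N : ℕ}

theorem mem_interior_orthant {x : Fin N → ℝ} (hx : ∀ k, 0 < x k) :
    x ∈ interior {y : Fin N → ℝ | 0 ≤ y} := by
  rw [mem_interior_iff_mem_nhds]
  filter_upwards [eventually_all.2 fun k =>
    continuousAt_const.eventually_lt (continuous_apply k).continuousAt (hx k)] with y hy
  exact fun k => (hy k).le

theorem isSupergrad_of_le_add {f : (Fin N → ℝ) → ℝ} {x : Fin N → ℝ}
    (φ : (Fin N → ℝ) →ₗ[ℝ] ℝ) (h : ∀ y, 0 ≤ y → f y ≤ f x + φ (y - x)) :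
    IsSupergrad f x fun k => φ (Pi.single k 1) := by
  intro y hy
  convert h y hy using 2
  conv_rhs => rw [pi_eq_sum_univ' (y - x)]
  simp [mul_comm]

theorem ConcaveOn.exists_isSupergrad {f : (Fin N → ℝ) → ℝ}
    (hf : ConcaveOn ℝ {y : Fin N → ℝ | 0 ≤ y} f) {x : Fin N → ℝ} (hx : ∀ k, 0 < x k) :
    ∃ g, IsSupergrad f x g := by
  obtain ⟨φ, hφ⟩ := hf.exists_le_add_of_mem_interior (mem_interior_orthant hx)
  exact ⟨_, isSupergrad_of_le_add φ.toLinearMap hφ⟩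

theorem IsSupergrad.nonneg {f : (Fin N → ℝ) → ℝ} {b : ℝ} (hb : ∀ y, 0 ≤ y → b ≤ f y)
    {z g : Fin N → ℝ} (hz : 0 ≤ z) (hg : IsSupergrad f z g) (k : Fin N) : 0 ≤ g k := by
  by_contra! hgk
  obtain ⟨t, ht, hgt⟩ : ∃ t : ℝ, 0 ≤ t ∧ g k * t = -(f z - b + 1) :=
    ⟨(f z - b + 1) / -g k, div_nonneg (by linarith [hb z hz]) (by linarith), by
      field_simp [hgk.ne]⟩
  have hy : 0 ≤ z + Pi.single k t := add_nonneg hz (Pi.single_nonneg.2 ht)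
  have hsum : ∑ i, g i * ((z + Pi.single k t : Fin N → ℝ) i - z i) = g k * t := by
    simp [Pi.single_apply]
  linarith [hb _ hy, hg _ hy]

end Orthant

namespace IsLBM

variable {N : ℕ} {f : Fin N → (Fin N → ℝ) → ℝ} {M : Matrix (Fin N) (Fin N) ℝ}

theorem nonneg (hM : IsLBM f M) {i : Fin N} {b : ℝ} (hb : ∀ y, 0 ≤ y → b ≤ f i y)
    (k : Fin N) : 0 ≤ M i k := by
  rw [hM i k]
  refine Real.sInf_nonneg ?_
  rintro _ ⟨z, hz, g, hg, rfl⟩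
  exact hg.nonneg hb hz k

theorem le_of_isSupergrad (hM : IsLBM f M) {i : Fin N} {b : ℝ} (hb : ∀ y, 0 ≤ y → b ≤ f i y)
    {x g : Fin N → ℝ} (hx : 0 ≤ x) (hg : IsSupergrad (f i) x g) (k : Fin N) : M i k ≤ g k := by
  rw [hM i k]
  refine csInf_le ⟨0, ?_⟩ ⟨x, hx, g, hg, rfl⟩
  rintro _ ⟨z, hz, g', hg', rfl⟩
  exact hg'.nonneg hb hz k

end IsLBM

namespace Matrix

variable {n : Type*} [Fintype n]

theorem exists_mulVec_eq_smul_of_mem_spectrum [DecidableEq n] {K : Type*} [Field K]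
    {A : Matrix n n K} {μ : K} (hμ : μ ∈ spectrum K A) : ∃ v ≠ 0, A *ᵥ v = μ • v := by
  rw [← spectrum_toLin', ← Module.End.hasEigenvalue_iff_mem_spectrum] at hμ
  obtain ⟨v, hv, hv0⟩ := hμ.exists_hasEigenvector
  exact ⟨v, hv0, by simpa using Module.End.mem_eigenspace_iff.1 hv⟩

variable {A : Matrix n n ℝ} {x : n → ℝ} {c : ℝ}

theorem norm_le_of_mulVec_eq_smul (hA : ∀ i j, 0 ≤ A i j) (hx : ∀ i, 0 < x i)
    (hc : A *ᵥ x ≤ c • x) {z : ℂ} {v : n → ℂ} (hv : v ≠ 0)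
    (hAv : A.map (algebraMap ℝ ℂ) *ᵥ v = z • v) : ‖z‖ ≤ c := by
  obtain ⟨k, hk⟩ := Function.ne_iff.1 hv
  -- compare `‖v‖` with `x` at an index maximizing `‖v i‖ / x i`
  obtain ⟨i, -, hi⟩ := Finset.exists_max_image Finset.univ (fun j => ‖v j‖ / x j)
    ⟨k, Finset.mem_univ k⟩
  set r := ‖v i‖ / x i
  have hvr : ∀ k, ‖v k‖ ≤ r * x k := fun k =>
    (div_le_iff₀ (hx k)).1 (hi k (Finset.mem_univ k))
  have hr : 0 < r :=
    (div_pos (norm_pos_iff.2 hk) (hx k)).trans_le (hi k (Finset.mem_univ k))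
  have hvi : ‖v i‖ = r * x i := (div_mul_cancel₀ _ (hx i).ne').symm
  have key : ‖z‖ * (r * x i) ≤ c * (r * x i) := calc
    ‖z‖ * (r * x i) = ‖∑ k, (A i k : ℂ) * v k‖ := by
      rw [← hvi, ← norm_mul]
      simpa [mulVec, dotProduct] using congrArg (‖·‖) (congrFun hAv i).symm
    _ ≤ ∑ k, A i k * ‖v k‖ := (norm_sum_le _ _).trans_eq <| by
      simp [Complex.norm_real, abs_of_nonneg (hA i _)]
    _ ≤ ∑ k, A i k * (r * x k) := by gcongr with k; exact hA i k; exact hvr k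
    _ = r * (A *ᵥ x) i := by
      rw [mulVec, dotProduct, Finset.mul_sum]
      exact Finset.sum_congr rfl fun k _ => by ring
    _ ≤ r * (c * x i) := by gcongr; exact hc i
    _ = c * (r * x i) := by ring
  exact le_of_mul_le_mul_right key (mul_pos hr (hx i))

theorem norm_le_of_mem_spectrum_of_mulVec_le [DecidableEq n] (hA : ∀ i j, 0 ≤ A i j)
    (hx : ∀ i, 0 < x i) (hc : A *ᵥ x ≤ c • x) {z : ℂ}
    (hz : z ∈ spectrum ℂ (A.map (algebraMap ℝ ℂ))) : ‖z‖ ≤ c :=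
  let ⟨_, hv, hAv⟩ := exists_mulVec_eq_smul_of_mem_spectrum hz
  norm_le_of_mulVec_eq_smul hA hx hc hv hAv

end Matrix

theorem exists_lt_one_le_smul {n : Type*} [Finite n] {a b : n → ℝ} (hb : ∀ i, 0 < b i)
    (hab : ∀ i, a i < b i) : ∃ c : ℝ, c < 1 ∧ a ≤ c • b := by
  cases isEmpty_or_nonempty n
  · exact ⟨0, zero_lt_one, fun i => isEmptyElim i⟩
  obtain ⟨j, hj⟩ := Finite.exists_max fun i => a i / b i
  refine ⟨a j / b j, (div_lt_one (hb j)).2 (hab j), fun i => ?_⟩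
  simpa [← div_le_iff₀ (hb i)] using hj i

theorem specRad_lt_one_of_mulVec_lt {N : ℕ} {A : Matrix (Fin N) (Fin N) ℝ}
    (hA : ∀ i j, 0 ≤ A i j) {x : Fin N → ℝ} (hx : ∀ i, 0 < x i) (hAx : ∀ i, (A *ᵥ x) i < x i) :
    specRad A < 1 := by
  obtain ⟨c, hc1, hc⟩ := exists_lt_one_le_smul hx hAx
  refine lt_of_le_of_lt (iSup₂_le fun z hz => ?_) (ENNReal.ofReal_lt_one.2 hc1)
  rw [← enorm_eq_nnnorm, ← ofReal_norm]
  exact ENNReal.ofReal_le_ofReal (A.norm_le_of_mem_spectrum_of_mulVec_le hA hx hc hz)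

theorem specRad_lt_one_of_fixed_point_general {N : ℕ} (f : Fin N → (Fin N → ℝ) → ℝ)
    (hconc : ∀ i, ConcaveOn ℝ {x : Fin N → ℝ | 0 ≤ x} (f i))
    (hpos : ∀ i, ∀ x : Fin N → ℝ, 0 ≤ x → 0 < f i x)
    (M : Matrix (Fin N) (Fin N) ℝ) (hM : IsLBM f M)
    (x : Fin N → ℝ) (hx : 0 ≤ x) (hfix : (fun i => f i x) = x) :
    specRad M < 1 := by
  have hfx : ∀ i, f i x = x i := congrFun hfix
  have hxpos : ∀ i, 0 < x i := fun i => hfx i ▸ hpos i x hx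
  have hnonneg : ∀ i y, 0 ≤ y → 0 ≤ f i y := fun i y hy => (hpos i y hy).le
  choose g hg using fun i => (hconc i).exists_isSupergrad hxpos
  refine specRad_lt_one_of_mulVec_lt (fun i => hM.nonneg (hnonneg i)) hxpos fun i => ?_
  have hg0 : f i 0 + ∑ k, g i k * x k ≤ f i x := by
    simpa [Finset.sum_neg_distrib] using hg i 0 le_rfl
  calc (M *ᵥ x) i = ∑ k, M i k * x k := rfl
    _ ≤ ∑ k, g i k * x k := Finset.sum_le_sum fun k _ =>
        mul_le_mul_of_nonneg_right (hM.le_of_isSupergrad (hnonneg i) hx (hg i) k) (hxpos k).le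
    _ < x i := by linarith [hpos i 0 le_rfl, hfx i]

/-- If a positive concave mapping has a fixed point, then the spectral radius of its lower
bounding matrix is strictly smaller than one. -/
theorem specRad_lt_one_of_fixed_point {N : ℕ} (f : Fin N → (Fin N → ℝ) → ℝ)
    (hconc : ∀ i, ConcaveOn ℝ {x : Fin N → ℝ | 0 ≤ x} (f i))
    (husc : ∀ i, UpperSemicontinuousOn (f i) {x : Fin N → ℝ | 0 ≤ x})
    (hpos : ∀ i, ∀ x : Fin N → ℝ, 0 ≤ x → 0 < f i x)
    (M : Matrix (Fin N) (Fin N) ℝ) (hM : IsLBM f M)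
    (x : Fin N → ℝ) (hx : 0 ≤ x) (hfix : (fun i => f i x) = x) :
    specRad M < 1 :=
  specRad_lt_one_of_fixed_point_general f hconc hpos M hM x hx hfix
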